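/- A graph G is a König–Egerváry graph if and only if every maximum independent set of G is a critical independent set. -/

import Mathlib

open Finset

variable {V : Type*} [Fintype V] [DecidableEq V] (G : SimpleGraph V) [DecidableRel G.Adj]

/-- `N(S)`: the set of vertices adjacent to some vertex of `S`. -/
def nbhd (S : Finset V) : Finset V := S.biUnion (fun v => G.neighborFinset v)

/-- `S` is an independent set of `G`. -/
def Indep (S : Finset V) : Prop := ∀ u ∈ S, ∀ v ∈ S, ¬ G.Adj u v

/-- The difference `d_G(S) = |S| - |N(S)|`. -/
def diffI (S : Finset V) : ℤ := (S.card : ℤ) - ((nbhd G S).card : ℤ)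

/-- `S` is a maximum independent set of `G`. -/
def IsMaxIndep (S : Finset V) : Prop :=
  Indep G S ∧ ∀ T : Finset V, Indep G T → T.card ≤ S.card

/-- `I` is a critical independent set of `G`. -/
def IsCritIndep (I : Finset V) : Prop :=
  Indep G I ∧ ∀ J : Finset V, Indep G J → diffI G J ≤ diffI G I

/-- `I` is a maximum critical independent set of `G`. -/
def IsMaxCritIndep (I : Finset V) : Prop :=
  IsCritIndep G I ∧ ∀ J : Finset V, IsCritIndep G J → J.card ≤ I.card

/-- `core(G)`: intersection of all maximum independent sets. -/
def core : Set V := {v | ∀ S : Finset V, IsMaxIndep G S → v ∈ S}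

/-- `corona(G)`: union of all maximum independent sets. -/
def corona : Set V := {v | ∃ S : Finset V, IsMaxIndep G S ∧ v ∈ S}

/-- `nucleus(G)`: intersection of all maximum critical independent sets. -/
def nucleus : Set V := {v | ∀ S : Finset V, IsMaxCritIndep G S → v ∈ S}

/-- `diadem(G)`: union of all maximum critical independent sets. -/
def diadem : Set V := {v | ∃ S : Finset V, IsMaxCritIndep G S ∧ v ∈ S}

/-- `ker(G)`: intersection of all critical independent sets. -/
def kerS : Set V := {v | ∀ S : Finset V, IsCritIndep G S → v ∈ S}

/-- A matching of `G`, given as an involution of the vertex set: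
unmatched vertices are fixed points, matched vertices are sent to their partner. -/
def IsMatching (M : V → V) : Prop :=
  Function.Involutive M ∧ ∀ v, M v ≠ v → G.Adj v (M v)

/-- Twice the number of edges of the matching `M`, i.e. the number of matched vertices. -/
def matchSize (M : V → V) : ℕ := (univ.filter fun v => M v ≠ v).card

/-- `M` is a maximum matching of `G`. -/
def IsMaxMatching (M : V → V) : Prop :=
  IsMatching G M ∧ ∀ M' : V → V, IsMatching G M' → matchSize M' ≤ matchSize M

/-- `M` is a matching of the induced subgraph `G[L]`. -/
def IsMatchingOn (L : Finset V) (M : V → V) : Prop :=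
  IsMatching G M ∧ ∀ v, M v ≠ v → v ∈ L

/-- `M` is a maximum matching of the induced subgraph `G[L]`. -/
def IsMaxMatchingOn (L : Finset V) (M : V → V) : Prop :=
  IsMatchingOn G L M ∧ ∀ M' : V → V, IsMatchingOn G L M' → matchSize M' ≤ matchSize M

/-- `S` is a maximum independent set of the induced subgraph `G[L]`. -/
def IsMaxIndepOn (L : Finset V) (S : Finset V) : Prop :=
  S ⊆ L ∧ Indep G S ∧ ∀ T : Finset V, T ⊆ L → Indep G T → T.card ≤ S.card

/-- `core` of the induced subgraph `G[L]`. -/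
def coreOn (L : Finset V) : Set V := {v | ∀ S : Finset V, IsMaxIndepOn G L S → v ∈ S}

/-- `D(G[L])`: vertices of `L` missed by some maximum matching of `G[L]`. -/
def Dset (L : Finset V) : Set V := {v | v ∈ L ∧ ∃ M : V → V, IsMaxMatchingOn G L M ∧ M v = v}

/-- The Larson boundary `∂_L(G)` of the set `L`. -/
def boundaryL (L : Finset V) : Set V := {v | v ∈ L ∧ ∃ w, w ∉ L ∧ G.Adj v w}

/-- The critical difference `d(G)`. -/
noncomputable def critDiff : ℤ := sSup {d : ℤ | ∃ X : Finset V, diffI G X = d}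

/-- The difference of `S` computed in the induced subgraph `G[L]`. -/
def diffOn (L : Finset V) (S : Finset V) : ℤ := (S.card : ℤ) - ((nbhd G S ∩ L).card : ℤ)

/-- The critical difference of the induced subgraph `G[L]`. -/
noncomputable def critDiffOn (L : Finset V) : ℤ := sSup {d : ℤ | ∃ X : Finset V, X ⊆ L ∧ diffOn G L X = d}

/-- `G` is a König–Egerváry graph: `α(G) + μ(G) = |V(G)|`. -/
def KonigEgervary : Prop :=
  ∃ (S : Finset V) (M : V → V), IsMaxIndep G S ∧ IsMaxMatching G M ∧
    2 * S.card + matchSize M = 2 * Fintype.card V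

/-!
For a matching `M` and any `J`, `M` sends the matched vertices of `J` injectively into `N(J)`,
so `d(J) ≤ |V| - 2μ`; for an independent `S`, `S` and `N(S)` are disjoint, so `d(S) ≥ 2|S| - |V|`.
In a König–Egerváry graph both bounds equal `|V| - 2μ` at `|S| = α`, so every maximum independent
set maximizes `d`. Conversely, if a maximum independent set `S` is critical then Hall's condition
holds for matching `N(S) = V \ S` into `S`: for a violating `X ⊆ N(S)` the set `S \ N(X)` would
beat `d(S)`. The resulting matching has `2μ ≥ 2(|V| - α)`.
-/

omit [DecidableEq V] [DecidableRel G.Adj] in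
lemma exists_isMaxIndep : ∃ S, IsMaxIndep G S := by
  classical
  obtain ⟨S, hS, hmax⟩ := exists_max_image (univ.filter (Indep G)) card
    ⟨∅, mem_filter.2 ⟨mem_univ _, by simp [Indep]⟩⟩
  exact ⟨S, (mem_filter.1 hS).2, fun T hT => hmax T (mem_filter.2 ⟨mem_univ T, hT⟩)⟩

omit [DecidableRel G.Adj] in
lemma exists_isMaxMatching : ∃ M, IsMaxMatching G M := by
  classical
  obtain ⟨M, hM, hmax⟩ := exists_max_image (univ.filter (IsMatching G)) matchSize
    ⟨id, mem_filter.2 ⟨mem_univ _, fun _ => rfl, fun _ hv => absurd rfl hv⟩⟩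
  exact ⟨M, (mem_filter.1 hM).2, fun M' hM' => hmax M' (mem_filter.2 ⟨mem_univ _, hM'⟩)⟩

section

variable {G}

lemma mem_nbhd {S : Finset V} {v : V} : v ∈ nbhd G S ↔ ∃ u ∈ S, G.Adj u v := by
  simp [nbhd]

omit [Fintype V] [DecidableEq V] [DecidableRel G.Adj] in
lemma Indep.mono {S T : Finset V} (hS : Indep G S) (hTS : T ⊆ S) : Indep G T :=
  fun u hu v hv => hS u (hTS hu) v (hTS hv)

lemma Indep.disjoint_nbhd {S : Finset V} (hS : Indep G S) : Disjoint S (nbhd G S) :=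
  disjoint_left.2 fun v hv hvN =>
    let ⟨u, hu, huv⟩ := mem_nbhd.1 hvN
    hS u hu v hv huv

lemma Indep.two_mul_card_sub_card_le_diffI {S : Finset V} (hS : Indep G S) :
    2 * (S.card : ℤ) - Fintype.card V ≤ diffI G S := by
  have := card_le_univ (S ∪ nbhd G S)
  rw [card_union_of_disjoint hS.disjoint_nbhd] at this
  unfold diffI
  omega

lemma IsMaxIndep.nbhd_eq_compl {S : Finset V} (hS : IsMaxIndep G S) : nbhd G S = Sᶜ := by
  refine Subset.antisymm
    (fun v hv => mem_compl.2 fun hvS => disjoint_left.1 hS.1.disjoint_nbhd hvS hv) fun v hv => ?_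
  by_contra hvN
  have hind : Indep G (insert v S) := by
    simp only [Indep, mem_insert]
    rintro a (rfl | ha) b (rfl | hb) hab
    · exact G.irrefl hab
    · exact hvN (mem_nbhd.2 ⟨b, hb, hab.symm⟩)
    · exact hvN (mem_nbhd.2 ⟨a, ha, hab⟩)
    · exact hS.1 a ha b hb hab
  have := hS.2 _ hind
  rw [card_insert_of_notMem (mem_compl.1 hv)] at this
  omega

lemma IsMatching.diffI_le {M : V → V} (hM : IsMatching G M) (J : Finset V) :
    diffI G J ≤ Fintype.card V - matchSize M := by
  have hmatched : (J.filter fun v => M v ≠ v).card ≤ (nbhd G J).card :=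
    card_le_card_of_injOn M
      (fun v hv => mem_nbhd.2 ⟨v, (mem_filter.1 hv).1, hM.2 v (mem_filter.1 hv).2⟩)
      hM.1.injective.injOn
  have hunmatched : (J.filter fun v => ¬ M v ≠ v).card ≤ (univ.filter fun v => ¬ M v ≠ v).card :=
    card_le_card (filter_subset_filter _ (subset_univ J))
  have hsplitJ := card_filter_add_card_filter_not (s := J) fun v => M v ≠ v
  have hsplitV := card_filter_add_card_filter_not (s := univ) fun v => M v ≠ v
  rw [card_univ] at hsplitV
  unfold diffI matchSize
  omega

lemma two_mul_card_le_matchSize {M : V → V} (hM : Function.Involutive M) {T : Finset V}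
    (hT : Disjoint T (T.image M)) : 2 * T.card ≤ matchSize M := by
  have hsub : T ∪ T.image M ⊆ univ.filter fun v => M v ≠ v := by
    intro v hv
    refine mem_filter.2 ⟨mem_univ v, ?_⟩
    rcases mem_union.1 hv with hvT | hvM
    · exact fun hfix => disjoint_left.1 hT hvT (mem_image.2 ⟨v, hvT, hfix⟩)
    · obtain ⟨u, huT, rfl⟩ := mem_image.1 hvM
      rw [hM u]
      exact fun hfix => disjoint_left.1 hT huT (mem_image.2 ⟨u, huT, hfix.symm⟩)
  have := card_le_card hsub
  rw [card_union_of_disjoint hT, card_image_of_injective _ hM.injective] at this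
  unfold matchSize
  omega

-- swaps each `x ∈ T` with `f x`, for `f` injective with values outside `T`
noncomputable def pairWith (T : Finset V) (f : T → V) : V → V := fun x =>
  if hx : x ∈ T then f ⟨x, hx⟩ else Function.extend f Subtype.val id x

section pairWith

omit [Fintype V]

variable {T : Finset V} {f : T → V}

lemma pairWith_of_mem {x : V} (hxT : x ∈ T) : pairWith T f x = f ⟨x, hxT⟩ :=
  dif_pos hxT

lemma pairWith_of_notMem {x : V} (hxT : x ∉ T) (hx : ¬∃ a, f a = x) : pairWith T f x = x := by
  rw [pairWith, dif_neg hxT, Function.extend_apply' _ _ _ hx, id]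

variable (hf : Function.Injective f) (hfT : ∀ x, f x ∉ T)
include hf hfT

lemma pairWith_apply_apply (x : T) : pairWith T f (f x) = x := by
  rw [pairWith, dif_neg (hfT x), hf.extend_apply]

lemma involutive_pairWith : Function.Involutive (pairWith T f) := by
  intro x
  by_cases hxT : x ∈ T
  · rw [pairWith_of_mem hxT, pairWith_apply_apply hf hfT]
  by_cases hx : ∃ a, f a = x
  · obtain ⟨a, rfl⟩ := hx
    rw [pairWith_apply_apply hf hfT, pairWith_of_mem a.2]
  · rw [pairWith_of_notMem hxT hx, pairWith_of_notMem hxT hx]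

end pairWith

omit [Fintype V] [DecidableRel G.Adj] in
lemma isMatching_pairWith {T : Finset V} {f : T → V} (hf : Function.Injective f)
    (hfT : ∀ x, f x ∉ T) (hadj : ∀ x : T, G.Adj x (f x)) : IsMatching G (pairWith T f) := by
  refine ⟨involutive_pairWith hf hfT, fun v hv => ?_⟩
  by_cases hvT : v ∈ T
  · rw [pairWith_of_mem hvT]
    exact hadj ⟨v, hvT⟩
  by_cases hx : ∃ a, f a = v
  · obtain ⟨a, rfl⟩ := hx
    rw [pairWith_apply_apply hf hfT]
    exact (hadj a).symm
  · exact absurd (pairWith_of_notMem hvT hx) hv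

lemma two_mul_card_le_matchSize_pairWith {T : Finset V} {f : T → V} (hf : Function.Injective f)
    (hfT : ∀ x, f x ∉ T) : 2 * T.card ≤ matchSize (pairWith T f) := by
  refine two_mul_card_le_matchSize (involutive_pairWith hf hfT) (disjoint_left.2 fun v hvT hv => ?_)
  obtain ⟨u, huT, rfl⟩ := mem_image.1 hv
  rw [pairWith_of_mem huT] at hvT
  exact hfT _ hvT

lemma IsCritIndep.card_le_card_nbhd_inter {I X : Finset V} (hI : IsCritIndep G I)
    (hX : X ⊆ nbhd G I) : X.card ≤ (nbhd G X ∩ I).card := by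
  have hnbhd : nbhd G (I \ nbhd G X) ⊆ nbhd G I \ X := by
    intro w hw
    obtain ⟨u, hu, huw⟩ := mem_nbhd.1 hw
    rw [mem_sdiff] at hu ⊢
    exact ⟨mem_nbhd.2 ⟨u, hu.1, huw⟩, fun hwX => hu.2 (mem_nbhd.2 ⟨w, hwX, huw.symm⟩)⟩
  have hcrit := hI.2 (I \ nbhd G X) (hI.1.mono sdiff_subset)
  have hcard := card_le_card hnbhd
  rw [card_sdiff_of_subset hX] at hcard
  have hXN := card_le_card hX
  have hinter := card_le_card (inter_subset_right : nbhd G X ∩ I ⊆ I)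
  rw [diffI, diffI, card_sdiff] at hcrit
  omega

lemma IsCritIndep.exists_isMatching {I : Finset V} (hI : IsCritIndep G I) :
    ∃ M, IsMatching G M ∧ 2 * (nbhd G I).card ≤ matchSize M := by
  have hall (s : Finset (nbhd G I)) :
      s.card ≤ (s.biUnion fun x => G.neighborFinset x ∩ I).card :=
    calc s.card = (s.map (Function.Embedding.subtype _)).card := (card_map _).symm
      _ ≤ (nbhd G (s.map (Function.Embedding.subtype _)) ∩ I).card :=
        hI.card_le_card_nbhd_inter fun x hx => by
          obtain ⟨y, -, rfl⟩ := mem_map.1 hx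
          exact y.2
      _ ≤ _ := card_le_card fun v hv => by
        simp only [mem_inter, mem_nbhd, mem_map, Function.Embedding.coe_subtype] at hv
        obtain ⟨⟨_, ⟨a, ha, rfl⟩, hav⟩, hvI⟩ := hv
        exact mem_biUnion.2 ⟨a, ha, mem_inter.2 ⟨(G.mem_neighborFinset _ _).2 hav, hvI⟩⟩
  obtain ⟨f, hf, hfI⟩ := (all_card_le_biUnion_card_iff_exists_injective _).1 hall
  have hfT (x : nbhd G I) : f x ∉ nbhd G I :=
    disjoint_left.1 hI.1.disjoint_nbhd (mem_inter.1 (hfI x)).2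
  have hadj (x : nbhd G I) : G.Adj x (f x) := (G.mem_neighborFinset _ _).1 (mem_inter.1 (hfI x)).1
  exact ⟨pairWith _ f, isMatching_pairWith hf hfT hadj, two_mul_card_le_matchSize_pairWith hf hfT⟩

lemma KonigEgervary.isCritIndep (hG : KonigEgervary G) {S : Finset V} (hS : IsMaxIndep G S) :
    IsCritIndep G S := by
  obtain ⟨S₀, M, hS₀, hM, hsize⟩ := hG
  have hcard : S.card = S₀.card := le_antisymm (hS₀.2 S hS.1) (hS.2 S₀ hS₀.1)
  refine ⟨hS.1, fun J _ => ?_⟩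
  calc diffI G J ≤ Fintype.card V - matchSize M := hM.1.diffI_le J
    _ = 2 * (S.card : ℤ) - Fintype.card V := by omega
    _ ≤ diffI G S := hS.1.two_mul_card_sub_card_le_diffI

lemma IsMaxIndep.konigEgervary {S : Finset V} (hS : IsMaxIndep G S) (hcrit : IsCritIndep G S) :
    KonigEgervary G := by
  obtain ⟨M, hM⟩ := exists_isMaxMatching G
  obtain ⟨M₀, hM₀, hM₀size⟩ := hcrit.exists_isMatching
  rw [hS.nbhd_eq_compl, card_compl] at hM₀size
  have hlower := hM₀size.trans (hM.2 M₀ hM₀)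
  have hupper := (hM.1.diffI_le S).trans' hS.1.two_mul_card_sub_card_le_diffI
  have hScard := card_le_univ S
  exact ⟨S, M, hS, hM, by omega⟩

end

theorem stmt4 : KonigEgervary G ↔ ∀ S : Finset V, IsMaxIndep G S → IsCritIndep G S := by
  refine ⟨fun hG S hS => hG.isCritIndep hS, fun hcrit => ?_⟩
  obtain ⟨S, hS⟩ := exists_isMaxIndep G
  exact hS.konigEgervary (hcrit S hS)
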